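/- arXiv:1109.2967 — 2 statements merged into one kernel-verified Lean document; each statement's English description precedes it below -/
import Mathlib

section
/- Let ℓ be an integer. The linear span of the monomials z ↦ z₁^{ν₁} · conj(z₁)^{ν₂} · z₂^{ν₃} · conj(z₂)^{ν₄}, where ν₁, ν₂ range over non-negative integers and ν₃, ν₄ over integers with ν₃ + ν₄ ≥ −ℓ, is dense in the weighted space L²(P, ℓΦ): for every measurable f : ℂ² → ℂ with ∫_P |z₂|^{2ℓ} |f|² dV < ∞ and every ε > 0 there is a finite linear combination p of such monomials with ∫_P |z₂|^{2ℓ} |f − p|² dV < ε. -/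
open MeasureTheory Complex

noncomputable section

/-- The product domain `P = D × D*`, the product of the unit disc and the punctured unit disc. -/
def Pdom : Set (ℂ × ℂ) :=
  {z | ‖z.1‖ < 1 ∧ (0 < ‖z.2‖ ∧ ‖z.2‖ < 1)}

/-- The Laurent-type monomials `z₁^ν₁ conj(z₁)^ν₂ z₂^ν₃ conj(z₂)^ν₄` with
`ν₁, ν₂ ≥ 0` and `ν₃ + ν₄ ≥ -ℓ`. -/
def laurentMonomials (ℓ : ℤ) : Set (ℂ × ℂ → ℂ) :=
  {m | ∃ (ν₁ ν₂ : ℕ) (ν₃ ν₄ : ℤ), -ℓ ≤ ν₃ + ν₄ ∧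
    m = fun z : ℂ × ℂ =>
      z.1 ^ ν₁ * (starRingEnd ℂ) z.1 ^ ν₂ * z.2 ^ ν₃ * (starRingEnd ℂ) z.2 ^ ν₄}

/-!
Multiplication by `z₂^ℓ` is an isometry from `L²(P, ℓΦ)` onto the unweighted `L²(P)`, and as
`z₂ ≠ 0` on `P`, `z₂^{-ℓ}` times a polynomial in `z₁, z̄₁, z₂, z̄₂` agrees on `P` with an
element of the span of the Laurent monomials. So it suffices to approximate `z₂^ℓ f` in `L²(P)`
by such polynomials. As `P` is bounded, Lebesgue measure on `P` is a finite measure carried by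
the compact closed bidisc; there bounded continuous functions are dense in `L²`, and by
Stone–Weierstrass they are uniform limits of polynomials in `z₁, z̄₁, z₂, z̄₂`.
-/

open scoped ENNReal

theorem ContinuousMap.exists_mem_starSubalgebra_near_continuous_of_isCompact_of_separatesPoints
    {𝕜 X : Type*} [RCLike 𝕜] [TopologicalSpace X] {A : StarSubalgebra 𝕜 C(X, 𝕜)}
    (hA : A.SeparatesPoints) (f : C(X, 𝕜)) {K : Set X} (hK : IsCompact K) {ε : ℝ}
    (hε : 0 < ε) : ∃ g ∈ A, ∀ x ∈ K, ‖g x - f x‖ < ε := by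
  have : CompactSpace K := isCompact_iff_compactSpace.mp hK
  let restrict : C(X, 𝕜) →⋆ₐ[𝕜] C(K, 𝕜) :=
    compStarAlgHom' 𝕜 𝕜 ⟨Subtype.val, continuous_subtype_val⟩
  have hsep : (A.map restrict).SeparatesPoints := by
    intro x y hxy
    obtain ⟨_, ⟨g, hg, rfl⟩, hgxy⟩ := hA (Subtype.coe_ne_coe.mpr hxy)
    exact ⟨_, ⟨restrict g, StarSubalgebra.mem_map.mpr ⟨g, hg, rfl⟩, rfl⟩, hgxy⟩
  have hf : restrict f ∈ (A.map restrict).topologicalClosure := by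
    rw [starSubalgebra_topologicalClosure_eq_top_of_separatesPoints _ hsep]
    trivial
  obtain ⟨_, hgK, hdist⟩ := Metric.mem_closure_iff.mp hf ε hε
  obtain ⟨g, hg, rfl⟩ := StarSubalgebra.mem_map.mp hgK
  refine ⟨g, hg, fun x hx => ?_⟩
  rw [← dist_eq_norm, dist_comm]
  exact (dist_apply_le_dist (f := restrict f) (g := restrict g) ⟨x, hx⟩).trans_lt hdist

theorem separatesPoints_adjoin_fst_snd {𝕜 : Type*} [CommSemiring 𝕜] [StarRing 𝕜]
    [TopologicalSpace 𝕜] [IsTopologicalSemiring 𝕜] [ContinuousStar 𝕜] :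
    (StarAlgebra.adjoin 𝕜 {ContinuousMap.fst, ContinuousMap.snd} :
      StarSubalgebra 𝕜 C(𝕜 × 𝕜, 𝕜)).SeparatesPoints := by
  intro x y hxy
  rw [Ne, Prod.ext_iff, not_and_or] at hxy
  rcases hxy with h | h
  · exact ⟨_, ⟨ContinuousMap.fst, StarAlgebra.subset_adjoin 𝕜 _ (by simp), rfl⟩, h⟩
  · exact ⟨_, ⟨ContinuousMap.snd, StarAlgebra.subset_adjoin 𝕜 _ (by simp), rfl⟩, h⟩

theorem eLpNorm_two_sq_eq_lintegral {α E : Type*} [MeasurableSpace α] [NormedAddCommGroup E]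
    {μ : Measure α} (f : α → E) : eLpNorm f 2 μ ^ 2 = ∫⁻ x, ‖f x‖ₑ ^ 2 ∂μ := by
  simpa using eLpNorm_nnreal_pow_eq_lintegral (f := f) (μ := μ) (p := 2) two_ne_zero

theorem ofReal_norm_zpow_mul_norm_sq_eq_enorm_sq {𝕜 : Type*} [NormedDivisionRing 𝕜] (ℓ : ℤ)
    (w v : 𝕜) :
    ENNReal.ofReal (‖w‖ ^ (2 * ℓ) * ‖v‖ ^ 2) = ‖w ^ ℓ * v‖ₑ ^ 2 := by
  rw [← ofReal_norm, ← ENNReal.ofReal_pow (norm_nonneg _), norm_mul, norm_zpow, mul_pow,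
    mul_comm 2 ℓ, zpow_mul, zpow_ofNat]

theorem MeasureTheory.MemLp.exists_mem_starSubalgebra_eLpNorm_sub_le
    {𝕜 X : Type*} [RCLike 𝕜] [TopologicalSpace X] [NormalSpace X] [MeasurableSpace X]
    [BorelSpace X] {μ : Measure X} [IsFiniteMeasure μ] [μ.WeaklyRegular]
    {A : StarSubalgebra 𝕜 C(X, 𝕜)} (hA : A.SeparatesPoints) {K : Set X} (hK : IsCompact K)
    (hμK : ∀ᵐ x ∂μ, x ∈ K) {p : ℝ≥0∞} (hp₁ : 1 ≤ p) (hp : p ≠ ∞) {f : X → 𝕜}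
    (hf : MemLp f p μ) {ε : ℝ≥0∞} (hε : ε ≠ 0) :
    ∃ g ∈ A, eLpNorm (f - ⇑g) p μ ≤ ε := by
  have hε₂ : ε / 2 ≠ 0 := (ENNReal.half_pos hε).ne'
  obtain ⟨h, hfh, -⟩ := hf.exists_boundedContinuous_eLpNorm_sub_le hp hε₂
  obtain ⟨δ, hδ, hδμ⟩ := ENNReal.exists_nnreal_pos_mul_lt
    (ENNReal.rpow_ne_top_of_nonneg (inv_nonneg.2 ENNReal.toReal_nonneg) (measure_ne_top μ .univ))
    hε₂
  obtain ⟨g, hgA, hgh⟩ :=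
    ContinuousMap.exists_mem_starSubalgebra_near_continuous_of_isCompact_of_separatesPoints hA
      h.toContinuousMap hK (NNReal.coe_pos.mpr hδ)
  have hhg : eLpNorm (⇑h - ⇑g) p μ ≤ ε / 2 := by
    refine (eLpNorm_le_of_ae_nnnorm_bound (C := δ) ?_).trans hδμ.le
    filter_upwards [hμK] with x hx
    rw [← NNReal.coe_le_coe, coe_nnnorm, Pi.sub_apply, norm_sub_rev]
    exact (hgh x hx).le
  refine ⟨g, hgA, ?_⟩
  calc eLpNorm (f - ⇑g) p μ = eLpNorm ((f - ⇑h) + (⇑h - ⇑g)) p μ := by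
        rw [sub_add_sub_cancel]
    _ ≤ eLpNorm (f - ⇑h) p μ + eLpNorm (⇑h - ⇑g) p μ :=
      eLpNorm_add_le (hf.aestronglyMeasurable.sub h.continuous.aestronglyMeasurable)
        (h.continuous.sub g.continuous).aestronglyMeasurable hp₁
    _ ≤ ε / 2 + ε / 2 := add_le_add hfh hhg
    _ = ε := ENNReal.add_halves ε

section

open ContinuousMap

theorem exists_monomial_eq_of_mem_closure_fst_snd {m : C(ℂ × ℂ, ℂ)}
    (hm : m ∈ Submonoid.closure ({fst, snd} ∪ star {fst, snd})) :
    ∃ a b c d : ℕ, ∀ z : ℂ × ℂ,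
      m z = z.1 ^ a * (starRingEnd ℂ) z.1 ^ b * z.2 ^ c * (starRingEnd ℂ) z.2 ^ d := by
  induction hm using Submonoid.closure_induction with
  | mem x hx =>
    rcases hx with (rfl | rfl) | hx
    · exact ⟨1, 0, 0, 0, fun z => by simp⟩
    · exact ⟨0, 0, 1, 0, fun z => by simp⟩
    · rcases hx with hx | hx <;> rw [← star_star x, hx]
      · exact ⟨0, 1, 0, 0, fun z => by simp⟩
      · exact ⟨0, 0, 0, 1, fun z => by simp⟩
  | one => exact ⟨0, 0, 0, 0, fun z => by simp⟩
  | mul x y _ _ hx hy =>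
    obtain ⟨a, b, c, d, hx⟩ := hx
    obtain ⟨a', b', c', d', hy⟩ := hy
    refine ⟨a + a', b + b', c + c', d + d', fun z => ?_⟩
    simp only [mul_apply, hx, hy, pow_add]
    ring

theorem exists_mem_span_laurentMonomials_eq_zpow_mul (ℓ : ℤ) {Q : C(ℂ × ℂ, ℂ)}
    (hQ : Q ∈ StarAlgebra.adjoin ℂ {fst, snd}) :
    ∃ p ∈ Submodule.span ℂ (laurentMonomials ℓ),
      ∀ z : ℂ × ℂ, z.2 ≠ 0 → p z = z.2 ^ (-ℓ) * Q z := by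
  replace hQ : Q ∈ Subalgebra.toSubmodule (StarAlgebra.adjoin ℂ {fst, snd}).toSubalgebra := hQ
  rw [StarAlgebra.adjoin_toSubalgebra, Algebra.adjoin_eq_span] at hQ
  induction hQ using Submodule.span_induction with
  | mem m hm =>
    obtain ⟨a, b, c, d, hm⟩ := exists_monomial_eq_of_mem_closure_fst_snd hm
    refine ⟨_, Submodule.subset_span ⟨a, b, c - ℓ, d, by omega, rfl⟩, fun z hz => ?_⟩
    simp only [hm, zpow_sub₀ hz, zpow_neg, zpow_natCast]
    ring
  | zero => exact ⟨0, zero_mem _, by simp⟩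
  | add x y _ _ hx hy =>
    obtain ⟨p, hp, hpx⟩ := hx
    obtain ⟨q, hq, hqy⟩ := hy
    exact ⟨p + q, add_mem hp hq, fun z hz => by simp [hpx z hz, hqy z hz, mul_add]⟩
  | smul c x _ hx =>
    obtain ⟨p, hp, hpx⟩ := hx
    exact ⟨c • p, Submodule.smul_mem _ c hp, fun z hz => by simp [hpx z hz, mul_left_comm]⟩

end

theorem isOpen_Pdom : IsOpen Pdom :=
  (isOpen_lt (by fun_prop) continuous_const).and
    ((isOpen_lt continuous_const (by fun_prop)).and (isOpen_lt (by fun_prop) continuous_const))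

theorem Pdom_subset_ball : Pdom ⊆ Metric.ball 0 1 := fun z hz => by
  rw [mem_ball_zero_iff, Prod.norm_def, max_lt_iff]
  exact ⟨hz.1, hz.2.2⟩

theorem snd_ne_zero_of_mem_Pdom {z : ℂ × ℂ} (hz : z ∈ Pdom) : z.2 ≠ 0 :=
  norm_pos_iff.mp hz.2.1

theorem monomials_dense_weighted_L2 (ℓ : ℤ) (f : ℂ × ℂ → ℂ) (hf : Measurable f)
    (hfL2 : (∫⁻ z in Pdom,
        ENNReal.ofReal (‖z.2‖ ^ (2 * ℓ) * ‖f z‖ ^ 2)) < ⊤) :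
    ∀ ε : ℝ, 0 < ε →
      ∃ p ∈ Submodule.span ℂ (laurentMonomials ℓ),
        (∫⁻ z in Pdom,
          ENNReal.ofReal (‖z.2‖ ^ (2 * ℓ) * ‖f z - p z‖ ^ 2))
          < ENNReal.ofReal ε := by
  intro ε hε
  have : IsFiniteMeasure (volume.restrict Pdom) := isFiniteMeasure_restrict.mpr
    ((measure_mono Pdom_subset_ball).trans_lt measure_ball_lt_top).ne
  have hweighted (u : ℂ × ℂ → ℂ) : ∫⁻ z in Pdom, ENNReal.ofReal (‖z.2‖ ^ (2 * ℓ) * ‖u z‖ ^ 2) =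
      eLpNorm (fun z => z.2 ^ ℓ * u z) 2 (volume.restrict Pdom) ^ 2 := by
    simp_rw [ofReal_norm_zpow_mul_norm_sq_eq_enorm_sq, eLpNorm_two_sq_eq_lintegral]
  have hF : MemLp (fun z => z.2 ^ ℓ * f z) 2 (volume.restrict Pdom) :=
    ⟨((measurable_snd.pow_const ℓ).mul hf).aestronglyMeasurable,
      (ENNReal.pow_lt_top_iff.mp (hweighted f ▸ hfL2)).resolve_right two_ne_zero⟩
  obtain ⟨Q, hQ, hFQ⟩ := hF.exists_mem_starSubalgebra_eLpNorm_sub_le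
    separatesPoints_adjoin_fst_snd (isCompact_closedBall 0 1)
    (ae_restrict_of_forall_mem isOpen_Pdom.measurableSet fun z hz =>
      Metric.ball_subset_closedBall (Pdom_subset_ball hz))
    one_le_two ENNReal.ofNat_ne_top (ε := ENNReal.ofReal √(ε / 2)) (by simp [hε])
  obtain ⟨p, hp, hpQ⟩ := exists_mem_span_laurentMonomials_eq_zpow_mul ℓ hQ
  refine ⟨p, hp, ?_⟩
  calc _ = eLpNorm ((fun z => z.2 ^ ℓ * f z) - ⇑Q) 2 (volume.restrict Pdom) ^ 2 := by
        rw [hweighted]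
        congr 1
        refine eLpNorm_congr_ae <|
          ae_restrict_of_forall_mem isOpen_Pdom.measurableSet fun z hz => ?_
        have hz2 := snd_ne_zero_of_mem_Pdom hz
        simp [hpQ z hz2, mul_sub, ← mul_assoc, mul_inv_cancel₀ (zpow_ne_zero ℓ hz2)]
    _ ≤ ENNReal.ofReal √(ε / 2) ^ 2 := by gcongr
    _ < ENNReal.ofReal ε := by
      rw [← ENNReal.ofReal_pow (Real.sqrt_nonneg _), Real.sq_sqrt (by positivity)]
      exact (ENNReal.ofReal_lt_ofReal_iff hε).2 (half_lt_self hε)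
end
end

section
/- The function (w₁,w₂) ↦ 1/w₂ is square-integrable on the Hartogs triangle with ∫_H |w₂|^{−2} dV(w) = π², while its derivative in w₂ is not square-integrable: ∫_H |w₂|^{−4} dV(w) = ∞. Hence 1/w₂ belongs to the Bergman space L²(H) ∩ O(H) but not to the Sobolev space W¹(H). -/
open MeasureTheory Complex

noncomputable section

/-- The Hartogs triangle. -/
def Hartogs : Set (ℂ × ℂ) := {w | ‖w.1‖ < ‖w.2‖ ∧ ‖w.2‖ < 1}

/-!
By Fubini, integrating a function of `w₂` over the Hartogs triangle weighs it with the area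
`π |w₂|²` of the disc `{|w₁| < |w₂|}`, so `∫_H |w₂|ⁿ dV = π ∫_{|z|<1} |z|ⁿ⁺² dA(z)`.
For `n = -2` this is `π · area(𝔻) = π²`; for `n = -4` it is `π ∫_𝔻 |z|⁻² dA`, which diverges
because `‖x‖⁻ᵈ` is not integrable near `0` in real dimension `d` (polar coordinates).
-/

open Set Metric ENNReal Module Real

theorem setLIntegral_prod_comp_snd {α β : Type*} [MeasurableSpace α] [MeasurableSpace β]
    {μ : Measure α} {ν : Measure β} [SFinite μ] [SFinite ν] {s : Set (α × β)}
    (hs : MeasurableSet s) {g : β → ℝ≥0∞} (hg : Measurable g) :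
    ∫⁻ p in s, g p.2 ∂μ.prod ν = ∫⁻ y, μ ((fun x ↦ (x, y)) ⁻¹' s) * g y ∂ν := by
  rw [← lintegral_indicator hs, lintegral_prod_symm (s.indicator fun p ↦ g p.2)
    ((hg.comp measurable_snd).indicator hs).aemeasurable]
  refine lintegral_congr fun y ↦ ?_
  have hslice : (fun x ↦ s.indicator (fun p ↦ g p.2) (x, y)) =
      ((fun x ↦ (x, y)) ⁻¹' s).indicator fun _ ↦ g y := by
    ext x
    by_cases hx : (x, y) ∈ s <;> simp [hx]
  rw [hslice, lintegral_indicator_const (measurable_prodMk_right hs), mul_comm]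

section NormRpow

variable {E : Type*} [NormedAddCommGroup E] [NormedSpace ℝ E] [FiniteDimensional ℝ E]
  [MeasurableSpace E] [BorelSpace E] [Nontrivial E] (μ : Measure E) [μ.IsAddHaarMeasure]

theorem integrableOn_ball_norm_rpow_iff {r : ℝ} (hr : 0 < r) (s : ℝ) :
    IntegrableOn (fun x : E ↦ ‖x‖ ^ s) (ball 0 r) μ ↔ -(finrank ℝ E : ℝ) < s := by
  have hradial : EqOn (fun y : ℝ ↦ y ^ (finrank ℝ E - 1) • y ^ s)
      (fun y ↦ y ^ (s + finrank ℝ E - 1)) (Ioo 0 r) := by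
    intro y hy
    have hdim : 1 ≤ finrank ℝ E := finrank_pos
    simp only [smul_eq_mul]
    rw [← Real.rpow_natCast, ← Real.rpow_add hy.1]
    congr 1
    push_cast [hdim]
    ring
  rw [integrableOn_fun_norm_addHaar μ (f := fun y ↦ y ^ s),
    integrableOn_congr_fun hradial measurableSet_Ioo,
    intervalIntegral.integrableOn_Ioo_rpow_iff hr]
  constructor <;> intro h <;> linarith

theorem lintegral_ball_norm_rpow_eq_top {r s : ℝ} (hr : 0 < r)
    (hs : s ≤ -(finrank ℝ E : ℝ)) :
    ∫⁻ x in ball 0 r, ENNReal.ofReal (‖x‖ ^ s) ∂μ = ∞ := by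
  by_contra hfin
  have hint := (lintegral_ofReal_ne_top_iff_integrable
    (measurable_norm.pow_const s).aestronglyMeasurable
    (.of_forall fun x ↦ by positivity)).1 hfin
  exact hs.not_gt ((integrableOn_ball_norm_rpow_iff μ hr s).1 hint)

end NormRpow

theorem lintegral_ball_norm_zpow_neg_two :
    ∫⁻ z in ball (0 : ℂ) 1, ENNReal.ofReal (‖z‖ ^ (-2 : ℤ)) = ∞ := by
  simpa [← Real.rpow_intCast] using
    lintegral_ball_norm_rpow_eq_top volume one_pos (s := -2) (by simp)

theorem ofReal_pi_eq_coe_nnreal_pi : ENNReal.ofReal π = NNReal.pi := by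
  rw [← NNReal.coe_real_pi, ofReal_coe_nnreal]

theorem snd_ne_zero_of_mem_Hartogs {w : ℂ × ℂ} (hw : w ∈ Hartogs) : w.2 ≠ 0 :=
  norm_pos_iff.1 ((norm_nonneg _).trans_lt hw.1)

theorem isOpen_Hartogs : IsOpen Hartogs :=
  (isOpen_lt continuous_fst.norm continuous_snd.norm).inter
    (isOpen_lt continuous_snd.norm continuous_const)

theorem volume_preimage_prodMk_Hartogs (z : ℂ) :
    volume ((fun x ↦ (x, z)) ⁻¹' Hartogs) =
      (ball (0 : ℂ) 1).indicator (fun z ↦ volume (ball (0 : ℂ) ‖z‖)) z := by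
  by_cases hz : ‖z‖ < 1
  · have hslice : (fun x ↦ (x, z)) ⁻¹' Hartogs = ball 0 ‖z‖ := by
      ext x
      simp [Hartogs, hz]
    rw [hslice, indicator_of_mem (by simpa using hz)]
  · have hslice : (fun x ↦ (x, z)) ⁻¹' Hartogs = ∅ := by
      ext x
      simp [Hartogs, hz]
    simp [hslice, hz]

theorem lintegral_Hartogs_comp_snd {g : ℂ → ℝ≥0∞} (hg : Measurable g) :
    ∫⁻ w in Hartogs, g w.2 = ∫⁻ z in ball (0 : ℂ) 1, volume (ball (0 : ℂ) ‖z‖) * g z := by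
  simp_rw [Measure.volume_eq_prod, setLIntegral_prod_comp_snd isOpen_Hartogs.measurableSet hg,
    volume_preimage_prodMk_Hartogs, ← indicator_mul_left]
  rw [lintegral_indicator measurableSet_ball]

theorem lintegral_Hartogs_norm_snd_zpow (n : ℤ) :
    ∫⁻ w in Hartogs, ENNReal.ofReal (‖w.2‖ ^ n) =
      ENNReal.ofReal π * ∫⁻ z in ball (0 : ℂ) 1, ENNReal.ofReal (‖z‖ ^ (n + 2)) := by
  rw [lintegral_Hartogs_comp_snd (g := fun z ↦ ENNReal.ofReal (‖z‖ ^ n)) (by fun_prop),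
    ← lintegral_const_mul' _ _ ofReal_ne_top]
  refine lintegral_congr_ae (ae_restrict_of_ae ?_)
  filter_upwards [volume.ae_ne 0] with z hz
  rw [zpow_add₀ (norm_ne_zero_iff.2 hz), Complex.volume_ball, ← ofReal_pi_eq_coe_nnreal_pi,
    ENNReal.ofReal_mul (by positivity), ← ENNReal.ofReal_pow (by positivity)]
  norm_cast
  ring

theorem one_over_w2_in_bergman_not_W1 :
    DifferentiableOn ℂ (fun w : ℂ × ℂ => w.2⁻¹) Hartogs ∧
    (∫⁻ w in Hartogs, ENNReal.ofReal (‖w.2‖ ^ (-2 : ℤ)))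
      = ENNReal.ofReal (Real.pi ^ 2) ∧
    (∫⁻ w in Hartogs, ENNReal.ofReal (‖w.2‖ ^ (-4 : ℤ))) = ⊤ := by
  refine ⟨fun w hw ↦
    (differentiableAt_snd.inv (snd_ne_zero_of_mem_Hartogs hw)).differentiableWithinAt, ?_, ?_⟩
  · rw [lintegral_Hartogs_norm_snd_zpow]
    simp [← ofReal_pi_eq_coe_nnreal_pi, ← ofReal_mul pi_nonneg, sq]
  · rw [lintegral_Hartogs_norm_snd_zpow, show (-4 : ℤ) + 2 = -2 by norm_num,
      lintegral_ball_norm_zpow_neg_two]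
    exact mul_top (ofReal_pos.2 pi_pos).ne'
end
end
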